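/- Suppose (λ_n) are complex numbers with Re(λ_n) ≤ 0, (a_n) positive reals, ρ_n := |λ_n|/a_n bounded with ρ_n → 0, and a_n = 1/n^d for some d > 1. Then β_n := (1/n)·∑_{m=1}^∞ ln|1 − λ_m/a_n| → 0 as n → ∞. -/

import Mathlib

open Real Filter Finset

lemma aux_one_le_abs (z : ℂ) (hz : z.re ≤ 0) : 1 ≤ ‖1 - z‖ := by
  have h2 : 1 ≤ ‖1 - z‖ ^ 2 := by
    rw [Complex.sq_norm, Complex.normSq_apply]
    simp only [Complex.sub_re, Complex.sub_im, Complex.one_re, Complex.one_im]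
    nlinarith [sq_nonneg z.im, sq_nonneg z.re]
  nlinarith [norm_nonneg (1 - z)]

lemma aux_log_one_add_le (x : ℝ) (hx : 0 ≤ x) : Real.log (1 + x) ≤ x := by
  have := Real.log_le_sub_one_of_pos (x := 1 + x) (by linarith)
  linarith

lemma aux_summable_base (d : ℝ) (hd : 1 < d) :
    Summable (fun m : ℕ => ((m : ℝ) + 1) ^ (-d)) := by
  have h : Summable (fun m : ℕ => ((m : ℝ)) ^ (-d)) :=
    Real.summable_nat_rpow.mpr (by linarith)
  have := (summable_nat_add_iff 1).mpr h
  refine this.congr fun m => ?_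
  push_cast
  ring_nf

lemma aux_tail_sum (d : ℝ) (hd : 1 < d) (K : ℕ) (hK : 1 ≤ K) (N : ℕ) :
    ∑ i ∈ Finset.range N, ((K : ℝ) + i + 1) ^ (-d) ≤ (K : ℝ) ^ (1 - d) / (d - 1) := by
  have hK0 : (0:ℝ) < K := by exact_mod_cast hK
  have hN0 : (0:ℝ) ≤ N := Nat.cast_nonneg N
  have hanti : AntitoneOn (fun x : ℝ => x ^ (-d)) (Set.Icc (K:ℝ) ((K:ℝ) + N)) := by
    intro x hx y hy hxy
    exact Real.rpow_le_rpow_of_nonpos (lt_of_lt_of_le hK0 hx.1) hxy (by linarith)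
  have h1 := hanti.sum_le_integral
  have h2 : ∫ x in (K:ℝ)..((K:ℝ) + N), x ^ (-d)
      = (((K:ℝ) + N) ^ (-d + 1) - (K:ℝ) ^ (-d + 1)) / (-d + 1) := by
    apply integral_rpow
    right
    refine ⟨by intro h; linarith, ?_⟩
    rw [Set.uIcc_of_le (by linarith)]
    intro h
    have := h.1
    linarith
  have h4 : (-d + 1 : ℝ) = 1 - d := by ring
  calc ∑ i ∈ Finset.range N, ((K : ℝ) + i + 1) ^ (-d)
      = ∑ i ∈ Finset.range N, (fun x : ℝ => x ^ (-d)) ((K:ℝ) + ((i:ℕ) + 1 : ℕ)) := by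
        apply Finset.sum_congr rfl; intro i _; push_cast; ring_nf
    _ ≤ ∫ x in (K:ℝ)..((K:ℝ) + N), x ^ (-d) := h1
    _ ≤ (K : ℝ) ^ (1 - d) / (d - 1) := by
        rw [h2, h4]
        have h3 : (1 - d : ℝ) = -(d - 1) := by ring
        rw [show (((K:ℝ) + N) ^ (1-d) - (K:ℝ) ^ (1-d)) / (1 - d)
            = ((K:ℝ) ^ (1-d) - ((K:ℝ) + N) ^ (1-d)) / (d - 1) by
          rw [h3, div_neg, ← neg_div, neg_sub]]
        have hpos : (0:ℝ) ≤ ((K:ℝ) + N) ^ (1-d) := by positivity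
        gcongr
        · linarith

noncomputable def auxC (d : ℝ) : ℝ := 2*d + d*(Real.log 4 + 1) + 2^(d-1)/(d-1)

lemma auxC_nonneg (d : ℝ) (hd : 1 < d) : 0 ≤ auxC d := by
  unfold auxC
  have h4 : (0:ℝ) ≤ Real.log 4 := Real.log_nonneg (by norm_num)
  have h5 : (0:ℝ) ≤ 2^(d-1)/(d-1) :=
    div_nonneg (Real.rpow_nonneg (by norm_num) _) (by linarith)
  nlinarith

lemma aux_mid (d : ℝ) (hd : 1 < d) (s : ℝ) (hs : 1 ≤ s) (K : ℕ) (hK : 1 ≤ K)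
    (hKs : (K:ℝ) ≤ s) (hsK2 : s ≤ 2 * K) :
    ∑ i ∈ Finset.range (K - 1), Real.log (1 + (s / ((i:ℝ) + 2)) ^ d)
      ≤ d * (Real.log 4 + 1) * s := by
  set M : ℕ := K - 1 with hM
  have hM0 : (0:ℝ) ≤ M := Nat.cast_nonneg M
  have h1M : (1:ℝ) ≤ 1 + M := by linarith
  have hMK : (1:ℝ) + M = K := by
    have : M + 1 = K := Nat.succ_pred_eq_of_pos hK
    push_cast [← this]; ring
  have hs0 : (0:ℝ) < s := by linarith
  have hanti : AntitoneOn (fun x : ℝ => Real.log (1 + (s / x) ^ d))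
      (Set.Icc (1:ℝ) ((1:ℝ) + M)) := by
    intro x hx y hy hxy
    have hx0 : (0:ℝ) < x := lt_of_lt_of_le one_pos hx.1
    have hy0 : (0:ℝ) < y := lt_of_lt_of_le one_pos hy.1
    have hdiv : s / y ≤ s / x := div_le_div_of_nonneg_left hs0.le hx0 hxy
    have h1 : (s / y) ^ d ≤ (s / x) ^ d :=
      Real.rpow_le_rpow (by positivity) hdiv (by linarith)
    exact Real.log_le_log (by positivity) (by linarith)
  have h1 := hanti.sum_le_integral
  have hcont1 : ContinuousOn (fun x : ℝ => Real.log (1 + (s / x) ^ d))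
      (Set.uIcc (1:ℝ) ((1:ℝ) + M)) := by
    rw [Set.uIcc_of_le h1M]
    apply ContinuousOn.log
    · apply ContinuousOn.add continuousOn_const
      apply ContinuousOn.rpow_const
      · exact continuousOn_const.div continuousOn_id (fun x hx => by
          have : (1:ℝ) ≤ x := hx.1; positivity)
      · intro x hx
        have hx1 : (1:ℝ) ≤ x := hx.1
        left; positivity
    · intro x hx
      have hx1 : (1:ℝ) ≤ x := hx.1
      positivity
  have hcont2 : ContinuousOn (fun x : ℝ => d * (Real.log (2*s) - Real.log x))
      (Set.uIcc (1:ℝ) ((1:ℝ) + M)) := by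
    rw [Set.uIcc_of_le h1M]
    apply ContinuousOn.mul continuousOn_const
    apply ContinuousOn.sub continuousOn_const
    apply ContinuousOn.log continuousOn_id
    intro x hx
    have : (1:ℝ) ≤ x := hx.1
    positivity
  have h2 : ∫ x in (1:ℝ)..((1:ℝ) + M), Real.log (1 + (s / x) ^ d)
      ≤ ∫ x in (1:ℝ)..((1:ℝ) + M), d * (Real.log (2*s) - Real.log x) := by
    apply intervalIntegral.integral_mono_on h1M
      (hcont1.intervalIntegrable) (hcont2.intervalIntegrable)
    intro x hx
    have hx1 : (1:ℝ) ≤ x := hx.1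
    have hx0 : (0:ℝ) < x := by linarith
    have hxK : x ≤ (K:ℝ) := by rw [← hMK]; exact hx.2
    have hxs : x ≤ s := le_trans hxK hKs
    have hsx1 : (1:ℝ) ≤ s / x := (one_le_div hx0).mpr hxs
    have hpow1 : (1:ℝ) ≤ (s/x)^d := Real.one_le_rpow hsx1 (by linarith)
    have h2d : (2:ℝ) ≤ (2:ℝ)^d := by
      calc (2:ℝ) = 2^(1:ℝ) := (Real.rpow_one 2).symm
      _ ≤ 2^d := Real.rpow_le_rpow_of_exponent_le (by norm_num) (by linarith)
    have hkey : 1 + (s/x)^d ≤ (2*s/x)^d := by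
      have : (2*s/x)^d = 2^d * (s/x)^d := by
        rw [show (2*s/x) = 2 * (s/x) by ring, Real.mul_rpow (by norm_num) (by positivity)]
      rw [this]
      nlinarith
    calc Real.log (1 + (s/x)^d) ≤ Real.log ((2*s/x)^d) :=
          Real.log_le_log (by positivity) hkey
      _ = d * Real.log (2*s/x) := Real.log_rpow (by positivity) d
      _ = d * (Real.log (2*s) - Real.log x) := by
          rw [Real.log_div (by positivity) (by positivity)]
  have h3 : ∫ x in (1:ℝ)..((1:ℝ) + M), d * (Real.log (2*s) - Real.log x)
      = d * ((M:ℝ) * Real.log (2*s) - (((1:ℝ)+M) * Real.log ((1:ℝ)+M) - (1+(M:ℝ)) + 1)) := by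
    rw [intervalIntegral.integral_const_mul]
    rw [intervalIntegral.integral_sub intervalIntegrable_const]
    · rw [intervalIntegral.integral_const, integral_log]
      · simp only [smul_eq_mul, Real.log_one, mul_zero, one_mul, mul_one]
        ring
    · apply ContinuousOn.intervalIntegrable
      rw [Set.uIcc_of_le h1M]
      apply ContinuousOn.log continuousOn_id
      intro x hx
      have : (1:ℝ) ≤ x := hx.1
      positivity
  have hK0 : (0:ℝ) < K := by exact_mod_cast hK
  have hMleK : (M:ℝ) ≤ K := by linarith [hMK]
  have hlog2s : 0 ≤ Real.log (2*s) := Real.log_nonneg (by linarith)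
  have hlogK : 0 ≤ Real.log K := Real.log_nonneg (by exact_mod_cast hK)
  have hlog4 : (0:ℝ) ≤ Real.log 4 := Real.log_nonneg (by norm_num)
  have hlogbound : Real.log (2*s) ≤ Real.log 4 + Real.log K := by
    rw [← Real.log_mul (by norm_num) (ne_of_gt hK0)]
    exact Real.log_le_log (by linarith) (by linarith)
  have p1 : (M:ℝ) * Real.log (2*s) ≤ (K:ℝ) * Real.log (2*s) :=
    mul_le_mul_of_nonneg_right hMleK hlog2s
  have p2 : (K:ℝ) * Real.log (2*s) ≤ (K:ℝ) * (Real.log 4 + Real.log K) :=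
    mul_le_mul_of_nonneg_left hlogbound hK0.le
  have p3 : (K:ℝ) * (Real.log 4 + 1) ≤ s * (Real.log 4 + 1) :=
    mul_le_mul_of_nonneg_right hKs (by linarith)
  have hinner : (M:ℝ) * Real.log (2*s) - ((K:ℝ) * Real.log K - (K:ℝ) + 1)
      ≤ s * (Real.log 4 + 1) := by nlinarith
  calc ∑ i ∈ Finset.range (K - 1), Real.log (1 + (s / ((i:ℝ) + 2)) ^ d)
      = ∑ i ∈ Finset.range M, Real.log (1 + (s / ((1:ℝ) + ((i:ℕ) + 1 : ℕ))) ^ d) := by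
        apply Finset.sum_congr rfl; intro i _; push_cast; ring_nf
    _ ≤ ∫ x in (1:ℝ)..((1:ℝ) + M), Real.log (1 + (s / x) ^ d) := h1
    _ ≤ ∫ x in (1:ℝ)..((1:ℝ) + M), d * (Real.log (2*s) - Real.log x) := h2
    _ = d * ((M:ℝ) * Real.log (2*s) - (((1:ℝ)+M) * Real.log ((1:ℝ)+M) - (1+(M:ℝ)) + 1)) := h3
    _ ≤ d * (Real.log 4 + 1) * s := by
        have q : ((1:ℝ)+(M:ℝ)) * Real.log ((1:ℝ)+(M:ℝ)) = (K:ℝ) * Real.log (K:ℝ) := by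
          rw [hMK]
        rw [q, hMK]
        nlinarith [mul_le_mul_of_nonneg_left hinner (by linarith : (0:ℝ) ≤ d)]

lemma aux_key (d : ℝ) (hd : 1 < d) (s : ℝ) (hs : 1 ≤ s) (N : ℕ) :
    ∑ m ∈ Finset.range N, Real.log (1 + (s / ((m:ℝ) + 1)) ^ d) ≤ auxC d * s := by
  have hs0 : (0:ℝ) < s := by linarith
  set K : ℕ := ⌊s⌋₊ with hKdef
  have hK : 1 ≤ K := Nat.le_floor (by exact_mod_cast hs)
  have hK1 : (1:ℝ) ≤ K := by exact_mod_cast hK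
  have hKs : (K:ℝ) ≤ s := Nat.floor_le hs0.le
  have hsK2 : s ≤ 2 * K := by
    have h := Nat.lt_floor_add_one s
    rw [← hKdef] at h
    linarith
  set t : ℕ → ℝ := fun m => Real.log (1 + (s / ((m:ℝ) + 1)) ^ d) with htdef
  have ht0 : ∀ m, 0 ≤ t m := fun m =>
    Real.log_nonneg (by nlinarith [Real.rpow_nonneg (by positivity : (0:ℝ) ≤ s / ((m:ℝ)+1)) d])
  -- split
  rw [← Finset.sum_filter_add_sum_filter_not (Finset.range N) (fun m => m < K) t]
  -- head part
  have hhead : ∑ m ∈ (Finset.range N).filter (fun m => m < K), t m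
      ≤ ∑ m ∈ Finset.range K, t m := by
    apply Finset.sum_le_sum_of_subset_of_nonneg
    · intro m hm
      simp only [Finset.mem_filter, Finset.mem_range] at hm ⊢
      exact hm.2
    · exact fun m _ _ => ht0 m
  have ht0bound : t 0 ≤ 2 * d * s := by
    have hd0 : (0:ℝ) < d := by linarith
    have h1 : t 0 = Real.log (1 + s ^ d) := by
      simp only [htdef, Nat.cast_zero]
      norm_num
    have hsd1 : (1:ℝ) ≤ s ^ d := Real.one_le_rpow hs (by linarith)
    have h2d : (2:ℝ) ≤ (2:ℝ)^d := by
      calc (2:ℝ) = 2^(1:ℝ) := (Real.rpow_one 2).symm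
      _ ≤ 2^d := Real.rpow_le_rpow_of_exponent_le (by norm_num) (by linarith)
    have hkey : 1 + s^d ≤ (2*s)^d := by
      rw [Real.mul_rpow (by norm_num) hs0.le]
      nlinarith
    have hlog : Real.log (2*s) ≤ 2*s := by
      have := Real.log_le_sub_one_of_pos (x := 2*s) (by linarith)
      linarith
    calc t 0 = Real.log (1 + s ^ d) := h1
      _ ≤ Real.log ((2*s)^d) := Real.log_le_log (by nlinarith) hkey
      _ = d * Real.log (2*s) := Real.log_rpow (by linarith) d
      _ ≤ d * (2*s) := mul_le_mul_of_nonneg_left hlog hd0.le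
      _ = 2 * d * s := by ring
  have hrangeK : ∑ m ∈ Finset.range K, t m ≤ 2*d*s + d*(Real.log 4 + 1)*s := by
    rw [show K = (K-1)+1 from (Nat.succ_pred_eq_of_pos hK).symm, Finset.sum_range_succ']
    have hmid : ∑ i ∈ Finset.range (K-1), t (i+1)
        ≤ d * (Real.log 4 + 1) * s := by
      have := aux_mid d hd s hs K hK hKs hsK2
      refine le_trans (le_of_eq (Finset.sum_congr rfl fun i _ => ?_)) this
      simp only [htdef]
      push_cast
      ring_nf
    linarith [hmid, ht0bound]
  -- tail part
  have hbase := aux_summable_base d hd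
  set v : ℕ → ℝ := fun m => if K ≤ m then s^d * ((m:ℝ)+1)^(-d) else 0 with hvdef
  have hv0 : ∀ m, 0 ≤ v m := fun m => by
    simp only [hvdef]
    split <;> positivity
  have hvle : ∀ m, v m ≤ s^d * ((m:ℝ)+1)^(-d) := fun m => by
    simp only [hvdef]
    split
    · exact le_refl _
    · positivity
  have hv : Summable v :=
    Summable.of_nonneg_of_le hv0 hvle (hbase.mul_left (s^d))
  have hteqv : ∀ m, K ≤ m → t m ≤ v m := by
    intro m hm
    have heq : (s / ((m:ℝ)+1))^d = s^d * ((m:ℝ)+1)^(-d) := by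
      rw [Real.div_rpow hs0.le (by positivity), Real.rpow_neg (by positivity),
        div_eq_mul_inv]
    simp only [hvdef, if_pos hm, htdef, ← heq]
    exact aux_log_one_add_le _ (by positivity)
  have htail : ∑ m ∈ (Finset.range N).filter (fun m => ¬ m < K), t m ≤ ∑' m, v m := by
    refine le_trans (Finset.sum_le_sum fun m hm => ?_) (Summable.sum_le_tsum _ (fun m _ => hv0 m) hv)
    simp only [Finset.mem_filter, not_lt] at hm
    exact hteqv m hm.2
  have hvtsum : ∑' m, v m = s^d * ∑' j : ℕ, ((K:ℝ) + j + 1)^(-d) := by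
    rw [← Summable.sum_add_tsum_nat_add K hv]
    have hz : ∑ i ∈ Finset.range K, v i = 0 := by
      apply Finset.sum_eq_zero
      intro i hi
      simp only [hvdef, if_neg (not_le.mpr (Finset.mem_range.mp hi))]
    rw [hz, zero_add]
    rw [← tsum_mul_left]
    apply tsum_congr
    intro j
    have : K ≤ j + K := Nat.le_add_left K j
    simp only [hvdef, if_pos this]
    push_cast
    ring_nf
  have hT : ∑' j : ℕ, ((K:ℝ) + j + 1)^(-d) ≤ (K:ℝ)^(1-d)/(d-1) :=
    Real.tsum_le_of_sum_range_le (fun j => by positivity) (aux_tail_sum d hd K hK)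
  have htail2 : s^d * ∑' j : ℕ, ((K:ℝ) + j + 1)^(-d) ≤ 2^(d-1)/(d-1) * s := by
    have hK2 : s/2 ≤ (K:ℝ) := by linarith
    have h1 : (K:ℝ)^(1-d) ≤ (s/2)^(1-d) :=
      Real.rpow_le_rpow_of_nonpos (by linarith) hK2 (by linarith)
    have h2 : s^d * ((s/2)^(1-d)/(d-1)) = 2^(d-1)/(d-1) * s := by
      have hss : s^d * s^(1-d) = s := by
        rw [← Real.rpow_add hs0]
        norm_num
      have hhalf : (s/2)^(1-d) = s^(1-d) * 2^(d-1) := by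
        rw [Real.div_rpow hs0.le (by norm_num), div_eq_mul_inv,
          ← Real.rpow_neg (by norm_num : (0:ℝ) ≤ 2), (show (-(1-d)) = d-1 by ring)]
      have hne : d - 1 ≠ 0 := by intro h; rw [sub_eq_zero] at h; linarith
      rw [hhalf]
      field_simp
      linear_combination hss
    calc s^d * ∑' j : ℕ, ((K:ℝ) + j + 1)^(-d)
        ≤ s^d * ((K:ℝ)^(1-d)/(d-1)) := by
          apply mul_le_mul_of_nonneg_left hT (by positivity)
      _ ≤ s^d * ((s/2)^(1-d)/(d-1)) := by
          apply mul_le_mul_of_nonneg_left _ (by positivity)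
          apply div_le_div_of_nonneg_right h1 (by linarith)
      _ = 2^(d-1)/(d-1) * s := h2
  have := le_trans hhead hrangeK
  have h2 := le_trans htail (le_trans (le_of_eq hvtsum) htail2)
  unfold auxC
  linarith

/-- `a n = 1/(n+1)^d`, i.e. `a_n = n^{-d}` with 1-based indexing. -/
theorem stmt_18 (d : ℝ) (hd : 1 < d) (a : ℕ → ℝ) (l : ℕ → ℂ)
    (ha : ∀ n : ℕ, a n = 1 / ((n : ℝ) + 1) ^ d)
    (hre : ∀ n, (l n).re ≤ 0)
    (hρ : Filter.Tendsto (fun n : ℕ => ‖l n‖ / a n) Filter.atTop (nhds 0)) :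
    (∀ n : ℕ, Summable (fun m : ℕ => Real.log (‖1 - l m / (a n : ℂ)‖))) ∧
    Filter.Tendsto
      (fun n : ℕ => (1 / ((n : ℝ) + 1)) *
        ∑' m : ℕ, Real.log (‖1 - l m / (a n : ℂ)‖))
      Filter.atTop (nhds 0) := by
  have hd0 : (0:ℝ) < d := by linarith
  have hA1 : ∀ n : ℕ, (1:ℝ) ≤ (n:ℝ) + 1 := fun n => by
    have := Nat.cast_nonneg (α := ℝ) n; linarith
  have hA0 : ∀ n : ℕ, (0:ℝ) < (n:ℝ) + 1 := fun n => lt_of_lt_of_le one_pos (hA1 n)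
  have hapos : ∀ n, 0 < a n := fun n => by rw [ha]; positivity
  have hAd1 : ∀ n : ℕ, (1:ℝ) ≤ ((n:ℝ)+1)^d := fun n => Real.one_le_rpow (hA1 n) hd0.le
  have habs : ∀ n m, ‖l m / (a n : ℂ)‖ = ‖l m‖ / a n := by
    intro n m
    rw [norm_div, Complex.norm_real, Real.norm_eq_abs, abs_of_pos (hapos n)]
  have hre2 : ∀ n m, (l m / (a n : ℂ)).re ≤ 0 := fun n m => by
    rw [Complex.div_ofReal_re]
    exact div_nonpos_iff.mpr (Or.inr ⟨hre m, (hapos n).le⟩)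
  have h1le : ∀ n m, 1 ≤ ‖1 - l m / (a n:ℂ)‖ := fun n m =>
    aux_one_le_abs _ (hre2 n m)
  have hf0 : ∀ n m, 0 ≤ Real.log (‖1 - l m / (a n:ℂ)‖) := fun n m =>
    Real.log_nonneg (h1le n m)
  set ρ : ℕ → ℝ := fun m => ‖l m‖ / a m with hρdef
  have hρ0 : ∀ m, 0 ≤ ρ m := fun m =>
    div_nonneg (norm_nonneg _) (hapos m).le
  have hub : ∀ n m, Real.log (‖1 - l m/(a n:ℂ)‖)
      ≤ Real.log (1 + ‖l m‖/a n) := by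
    intro n m
    apply Real.log_le_log (by linarith [h1le n m])
    calc ‖1 - l m/(a n:ℂ)‖ = ‖(1:ℂ) - l m/(a n:ℂ)‖ := rfl
      _ ≤ ‖(1:ℂ)‖ + ‖l m/(a n:ℂ)‖ := norm_sub_le _ _
      _ = 1 + ‖l m‖/a n := by
          rw [norm_one, habs n m]
  have hratio : ∀ n m, ‖l m‖ / a n
      = ρ m * (((n:ℝ)+1)^d / ((m:ℝ)+1)^d) := by
    intro n m
    simp only [hρdef]
    rw [ha n, ha m]
    have h1 : ((m:ℝ)+1)^d ≠ 0 := by positivity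
    have h2 : ((n:ℝ)+1)^d ≠ 0 := by positivity
    field_simp
  obtain ⟨C, hCub⟩ := hρ.bddAbove_range
  have hC : ∀ m, ρ m ≤ C := fun m => hCub ⟨m, rfl⟩
  have hC0 : (0:ℝ) ≤ C := le_trans (hρ0 0) (hC 0)
  have hbase := aux_summable_base d hd
  -- Part 1
  have hsummable : ∀ n : ℕ, Summable (fun m : ℕ =>
      Real.log (‖1 - l m / (a n : ℂ)‖)) := by
    intro n
    apply Summable.of_nonneg_of_le (hf0 n) ?_ (hbase.mul_left (C * ((n:ℝ)+1)^d))
    intro m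
    have hX0 : (0:ℝ) ≤ ((n:ℝ)+1)^d / ((m:ℝ)+1)^d := by positivity
    calc Real.log (‖1 - l m/(a n:ℂ)‖)
        ≤ Real.log (1 + ‖l m‖/a n) := hub n m
      _ ≤ ‖l m‖/a n :=
          aux_log_one_add_le _ (div_nonneg (norm_nonneg _) (hapos n).le)
      _ = ρ m * (((n:ℝ)+1)^d / ((m:ℝ)+1)^d) := hratio n m
      _ ≤ C * (((n:ℝ)+1)^d / ((m:ℝ)+1)^d) := mul_le_mul_of_nonneg_right (hC m) hX0
      _ = C * ((n:ℝ)+1)^d * ((m:ℝ)+1)^(-d) := by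
          rw [Real.rpow_neg (hA0 m).le, div_eq_mul_inv, mul_assoc]
  refine ⟨hsummable, ?_⟩
  -- Part 2
  rw [Metric.tendsto_atTop]
  intro δ hδ
  set c := auxC d with hcdef
  have hc0 : 0 ≤ c := auxC_nonneg d hd
  set ε : ℝ := min 1 ((δ/(2*(c+1)))^d) with hεdef
  have hε0 : 0 < ε := lt_min one_pos (Real.rpow_pos_of_pos (by positivity) d)
  set σ : ℝ := ε ^ (1/d) with hσdef
  have hσ0 : 0 < σ := Real.rpow_pos_of_pos hε0 _
  have hσle : σ ≤ δ/(2*(c+1)) := by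
    have h1 : ε ≤ (δ/(2*(c+1)))^d := min_le_right _ _
    have h2 : σ ≤ ((δ/(2*(c+1)))^d)^(1/d) :=
      Real.rpow_le_rpow hε0.le h1 (by positivity)
    have h3 : ((δ/(2*(c+1)))^d)^(1/d) = δ/(2*(c+1)) := by
      rw [← Real.rpow_mul (by positivity), mul_one_div, div_self (ne_of_gt hd0),
        Real.rpow_one]
    rw [h3] at h2
    exact h2
  have hcσ : c * σ < δ/2 := by
    have : c * σ ≤ c * (δ/(2*(c+1))) := mul_le_mul_of_nonneg_left hσle hc0
    have h4 : c * (δ/(2*(c+1))) < δ/2 := by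
      have h5 : c * (δ/(2*(c+1))) = δ*c/(2*(c+1)) := by ring
      rw [h5, div_lt_div_iff₀ (by positivity) (by norm_num : (0:ℝ) < 2)]
      nlinarith
    linarith
  obtain ⟨M, hM⟩ := Metric.tendsto_atTop.mp hρ ε hε0
  have hMε : ∀ m, M ≤ m → ρ m ≤ ε := by
    intro m hm
    have h := hM m hm
    rw [Real.dist_eq, sub_zero, abs_of_nonneg (hρ0 m)] at h
    exact h.le
  -- the key bound for suitable n
  have hmain : ∀ n : ℕ, 1 ≤ σ * ((n:ℝ)+1) →
      (∑' m, Real.log (‖1 - l m/(a n:ℂ)‖))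
        ≤ M * (Real.log (1+C) + d * Real.log ((n:ℝ)+1)) + c * (σ * ((n:ℝ)+1)) := by
    intro n hn
    set s : ℝ := σ * ((n:ℝ)+1) with hsdef
    have hs0 : 0 < s := by linarith
    set H : ℝ := Real.log (1+C) + d * Real.log ((n:ℝ)+1) with hHdef
    have hH0 : 0 ≤ H :=
      add_nonneg (Real.log_nonneg (by linarith)) (mul_nonneg hd0.le (Real.log_nonneg (hA1 n)))
    apply Real.tsum_le_of_sum_range_le (hf0 n)
    intro N
    have hsd : s ^ d = ε * ((n:ℝ)+1)^d := by
      rw [hsdef, Real.mul_rpow hσ0.le (hA0 n).le, hσdef,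
        ← Real.rpow_mul hε0.le, one_div, inv_mul_cancel₀ (ne_of_gt hd0), Real.rpow_one]
    have hGle : ∀ m, Real.log (‖1 - l m/(a n:ℂ)‖)
        ≤ (if m < M then H else Real.log (1 + (s/((m:ℝ)+1))^d)) := by
      intro m
      have hX0 : (0:ℝ) ≤ ((n:ℝ)+1)^d / ((m:ℝ)+1)^d := by positivity
      by_cases hm : m < M
      · rw [if_pos hm]
        have hXle : ((n:ℝ)+1)^d / ((m:ℝ)+1)^d ≤ ((n:ℝ)+1)^d :=
          div_le_self (by positivity) (hAd1 m)
        have hb1 : ‖l m‖/a n ≤ C * ((n:ℝ)+1)^d := by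
          rw [hratio n m]
          exact mul_le_mul (hC m) hXle hX0 hC0
        have hb2 : 1 + C * ((n:ℝ)+1)^d ≤ (1+C) * ((n:ℝ)+1)^d := by
          have := hAd1 n
          nlinarith
        calc Real.log (‖1 - l m/(a n:ℂ)‖)
            ≤ Real.log (1 + ‖l m‖/a n) := hub n m
          _ ≤ Real.log ((1+C) * ((n:ℝ)+1)^d) := by
              apply Real.log_le_log (by
                have := div_nonneg (norm_nonneg (l m)) (hapos n).le
                linarith)
              have := habs n m
              nlinarith [hb1, hb2, norm_nonneg (l m), (hapos n).le]
          _ = H := by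
              rw [Real.log_mul (by linarith) (by positivity), Real.log_rpow (hA0 n)]
      · rw [if_neg hm]
        push_neg at hm
        have hb1 : ‖l m‖/a n ≤ (s/((m:ℝ)+1))^d := by
          rw [hratio n m]
          have h1 : (s/((m:ℝ)+1))^d = ε * (((n:ℝ)+1)^d / ((m:ℝ)+1)^d) := by
            rw [Real.div_rpow hs0.le (hA0 m).le, hsd]
            ring
          rw [h1]
          exact mul_le_mul_of_nonneg_right (hMε m hm) hX0
        calc Real.log (‖1 - l m/(a n:ℂ)‖)
            ≤ Real.log (1 + ‖l m‖/a n) := hub n m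
          _ ≤ Real.log (1 + (s/((m:ℝ)+1))^d) := by
              apply Real.log_le_log
              · have := div_nonneg (norm_nonneg (l m)) (hapos n).le
                linarith
              · linarith
    set G : ℕ → ℝ := fun m => if m < M then H else Real.log (1 + (s/((m:ℝ)+1))^d)
      with hGdef
    have hstep1 : ∑ m ∈ Finset.range N, Real.log (‖1 - l m/(a n:ℂ)‖)
        ≤ ∑ m ∈ Finset.range N, G m := Finset.sum_le_sum (fun m _ => hGle m)
    have hlog0 : ∀ m : ℕ, 0 ≤ Real.log (1 + (s/((m:ℝ)+1))^d) := fun m =>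
      Real.log_nonneg (by nlinarith [Real.rpow_nonneg (by positivity : (0:ℝ) ≤ s/((m:ℝ)+1)) d])
    have hstep2 : ∑ m ∈ Finset.range N, G m ≤ M * H + c * s := by
      rw [← Finset.sum_filter_add_sum_filter_not (Finset.range N) (fun m => m < M) G]
      have hA : ∑ m ∈ (Finset.range N).filter (fun m => m < M), G m ≤ M * H := by
        rw [Finset.sum_congr rfl (fun m hm => if_pos (Finset.mem_filter.mp hm).2)]
        rw [Finset.sum_const, nsmul_eq_mul]
        apply mul_le_mul_of_nonneg_right ?_ hH0
        have : (Finset.range N).filter (fun m => m < M) ⊆ Finset.range M := by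
          intro m hm
          simp only [Finset.mem_filter, Finset.mem_range] at hm ⊢
          exact hm.2
        have := Finset.card_le_card this
        simp only [Finset.card_range] at this
        exact_mod_cast this
      have hB : ∑ m ∈ (Finset.range N).filter (fun m => ¬ m < M), G m ≤ c * s := by
        rw [Finset.sum_congr rfl (fun m hm => if_neg (Finset.mem_filter.mp hm).2)]
        calc ∑ m ∈ (Finset.range N).filter (fun m => ¬ m < M),
              Real.log (1 + (s/((m:ℝ)+1))^d)
            ≤ ∑ m ∈ Finset.range N, Real.log (1 + (s/((m:ℝ)+1))^d) :=
              Finset.sum_le_sum_of_subset_of_nonneg (Finset.filter_subset _ _)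
                (fun m _ _ => hlog0 m)
          _ ≤ c * s := aux_key d hd s hn N
      linarith
    exact le_trans hstep1 hstep2
  -- eventual bound
  have tendsto_An : Tendsto (fun n : ℕ => (n:ℝ)+1) atTop atTop :=
    tendsto_atTop_add_const_right _ 1 tendsto_natCast_atTop_atTop
  have h1 : Tendsto (fun n : ℕ => Real.log ((n:ℝ)+1) / ((n:ℝ)+1)) atTop (nhds 0) :=
    (Real.isLittleO_log_id_atTop.tendsto_div_nhds_zero).comp tendsto_An
  have h2 : Tendsto (fun n : ℕ => 1 / ((n:ℝ)+1)) atTop (nhds 0) := by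
    simp only [one_div]
    exact tendsto_An.inv_tendsto_atTop
  have htend : Tendsto (fun n : ℕ =>
      M * (Real.log (1+C) + d * Real.log ((n:ℝ)+1)) / ((n:ℝ)+1)) atTop (nhds 0) := by
    have := ((h2.const_mul ((M:ℝ) * Real.log (1+C))).add (h1.const_mul ((M:ℝ)*d)))
    simp only [mul_zero, add_zero] at this
    apply this.congr
    intro n
    field_simp
  have hev1 := htend.eventually_lt_const (half_pos hδ)
  have hev2 : ∀ᶠ n : ℕ in atTop, 1 ≤ σ * ((n:ℝ)+1) := by
    filter_upwards [tendsto_An.eventually_ge_atTop σ⁻¹] with n hn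
    calc (1:ℝ) = σ * σ⁻¹ := (mul_inv_cancel₀ (ne_of_gt hσ0)).symm
      _ ≤ σ * ((n:ℝ)+1) := mul_le_mul_of_nonneg_left hn hσ0.le
  obtain ⟨N₀, hN₀⟩ := Filter.eventually_atTop.mp (hev1.and hev2)
  refine ⟨N₀, fun n hn => ?_⟩
  obtain ⟨he1, he2⟩ := hN₀ n hn
  have htsum0 : 0 ≤ ∑' m, Real.log (‖1 - l m/(a n:ℂ)‖) :=
    tsum_nonneg (hf0 n)
  have hF0 : 0 ≤ (1 / ((n:ℝ) + 1)) * ∑' m, Real.log (‖1 - l m/(a n:ℂ)‖) :=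
    mul_nonneg (by positivity) htsum0
  rw [Real.dist_eq, sub_zero, abs_of_nonneg hF0]
  have hb := hmain n he2
  have hmul : (1 / ((n:ℝ)+1)) * ∑' m, Real.log (‖1 - l m/(a n:ℂ)‖)
      ≤ (1 / ((n:ℝ)+1)) * (M * (Real.log (1+C) + d * Real.log ((n:ℝ)+1)) + c * (σ * ((n:ℝ)+1))) :=
    mul_le_mul_of_nonneg_left hb (by positivity)
  have heq : (1 / ((n:ℝ)+1)) * (M * (Real.log (1+C) + d * Real.log ((n:ℝ)+1)) + c * (σ * ((n:ℝ)+1)))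
      = M * (Real.log (1+C) + d * Real.log ((n:ℝ)+1)) / ((n:ℝ)+1) + c * σ := by
    have := ne_of_gt (hA0 n)
    field_simp
  rw [heq] at hmul
  calc (1 / ((n:ℝ)+1)) * ∑' m, Real.log (‖1 - l m/(a n:ℂ)‖)
      ≤ M * (Real.log (1+C) + d * Real.log ((n:ℝ)+1)) / ((n:ℝ)+1) + c * σ := hmul
    _ < δ/2 + δ/2 := add_lt_add he1 hcσ
    _ = δ := by ring
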